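/- arXiv:2511.19076 — 5 statements merged into one kernel-verified Lean document; each statement's English description precedes it below -/
import Mathlib

section
/- For every integer n ≥ 1 and every integer k with 0 ≤ k ≤ n−1, the Eulerian number A(n,k) satisfies A(n,k) = Σ_{i=1}^{k+1} (−1)^{k+1−i} · C(n−i, k+1−i) · S(n,i) · i!, where C(a,b) denotes the binomial coefficient. -/
/-- The number of descents of a permutation `π` of `{0, …, n-1}`:
indices `i` with `i + 1 < n` and `π (i+1) < π i`. -/
noncomputable def descentCount {n : ℕ} (π : Equiv.Perm (Fin n)) : ℕ :=
  Nat.card {i : Fin n // ∃ h : (i : ℕ) + 1 < n, π ⟨(i : ℕ) + 1, h⟩ < π i}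

/-- The Eulerian number `A(n,k)`: the number of permutations of an `n`-element
set with exactly `k` descents. -/
noncomputable def eulerian (n k : ℕ) : ℕ :=
  Nat.card {π : Equiv.Perm (Fin n) // descentCount π = k}

/-- The Stirling number of the second kind `S(n,i)`: the number of partitions of
an `n`-element set into `i` nonempty (unordered) blocks. -/
noncomputable def stirling (n i : ℕ) : ℕ :=
  Nat.card {P : Finpartition (Finset.univ : Finset (Fin n)) // P.parts.card = i}

/-!
Sorting the values of a surjection `f : Fin (m + 1) → Fin (j + 1)` writes it uniquely as
`b ∘ σ⁻¹`, where `σ` is a permutation, `b` is a monotone surjection, and `σ` increases on every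
level set of `b`. A monotone surjection is determined by its set of `j` ascents among the `m` gaps,
and the condition on `σ` says exactly that this set contains the descent set of `σ`. Counting
surjections both ways gives the triangular system
`(j + 1)! S(m + 1, j + 1) = ∑_d A(m + 1, d) C(m - d, m - j)`, and binomial inversion solves it
for the Eulerian numbers.
-/

open Finset Function
open Equiv (Perm)

namespace Finpartition

variable {α β : Type*} [DecidableEq α]

theorem parts_eq_image_part {s : Finset α} (P : Finpartition s) : P.parts = s.image P.part := by
  ext t
  rw [mem_image]
  constructor
  · exact fun ht ↦ P.part_surjOn ht
  · rintro ⟨a, ha, rfl⟩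
    exact P.part_mem.2 ha

variable [Fintype α]

theorem ext_of_part_eq_part_iff {P Q : Finpartition (univ : Finset α)}
    (h : ∀ a b, P.part a = P.part b ↔ Q.part a = Q.part b) : P = Q := by
  have hpart : P.part = Q.part := by
    funext a
    ext b
    rw [P.mem_part_iff_part_eq_part (mem_univ b) (mem_univ a),
      Q.mem_part_iff_part_eq_part (mem_univ b) (mem_univ a), h]
  exact Finpartition.ext (by rw [parts_eq_image_part, parts_eq_image_part, hpart])

theorem part_ofSetoid_eq_part_iff (s : Setoid α) [DecidableRel s.r] {a b : α} :
    (ofSetoid s).part a = (ofSetoid s).part b ↔ s a b := by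
  rw [← (ofSetoid s).mem_part_iff_part_eq_part (mem_univ a) (mem_univ b),
    mem_part_ofSetoid_iff_rel]
  exact ⟨s.symm, s.symm⟩

def liftParts (P : Finpartition (univ : Finset α)) (e : P.parts → β) (a : α) : β :=
  e ⟨P.part a, P.part_mem.2 (mem_univ a)⟩

variable {P : Finpartition (univ : Finset α)}

theorem liftParts_eq_liftParts_iff (e : P.parts ≃ β) {a b : α} :
    P.liftParts e a = P.liftParts e b ↔ P.part a = P.part b := by
  rw [liftParts, liftParts, e.apply_eq_iff_eq, Subtype.mk.injEq]

theorem surjective_liftParts (e : P.parts ≃ β) : Surjective (P.liftParts e) := by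
  intro c
  obtain ⟨a, -, ha⟩ := P.part_surjOn (e.symm c).2
  exact ⟨a, by simp [liftParts, ha]⟩

theorem exists_liftParts_eq {f : α → β} (hf : Surjective f)
    (hP : ∀ a b, P.part a = P.part b ↔ f a = f b) :
    ∃ e : P.parts ≃ β, P.liftParts e = f := by
  choose rep _ hrep using fun t : P.parts ↦ P.part_surjOn t.2
  have hrep_part : ∀ a, f (rep ⟨P.part a, P.part_mem.2 (mem_univ a)⟩) = f a :=
    fun a ↦ (hP _ _).1 (hrep _)
  refine ⟨Equiv.ofBijective (fun t ↦ f (rep t)) ⟨fun t u htu ↦ ?_, fun c ↦ ?_⟩,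
    funext hrep_part⟩
  · exact Subtype.ext ((hrep t).symm.trans (((hP _ _).2 htu).trans (hrep u)))
  · obtain ⟨a, rfl⟩ := hf c
    exact ⟨_, hrep_part a⟩

def sigmaLiftParts (Pe : Σ P : {P : Finpartition (univ : Finset α) // #P.parts = Nat.card β},
    P.1.parts ≃ β) :
    {f : α → β // Surjective f} :=
  ⟨Pe.1.1.liftParts Pe.2, surjective_liftParts Pe.2⟩

theorem bijective_sigmaLiftParts : Bijective (sigmaLiftParts (α := α) (β := β)) := by
  classical
  refine ⟨?_, fun f ↦ ?_⟩
  · rintro ⟨⟨P, hP⟩, e⟩ ⟨⟨Q, hQ⟩, e'⟩ h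
    have hlift : P.liftParts e = Q.liftParts e' := congrArg Subtype.val h
    obtain rfl : P = Q := ext_of_part_eq_part_iff fun a b ↦ by
      rw [← liftParts_eq_liftParts_iff e, ← liftParts_eq_liftParts_iff e', hlift]
    obtain rfl : e = e' := Equiv.ext fun t ↦ by
      obtain ⟨a, -, ha⟩ := P.part_surjOn t.2
      simpa [liftParts, ha] using congrFun hlift a
    rfl
  · let P := ofSetoid (Setoid.ker f.1)
    obtain ⟨e, he⟩ := exists_liftParts_eq f.2 (P := P) fun _ _ ↦ part_ofSetoid_eq_part_iff _
    have hcard : #P.parts = Nat.card β := by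
      rw [← Nat.card_congr e, Nat.card_eq_fintype_card, Fintype.card_coe]
    exact ⟨⟨⟨P, hcard⟩, e⟩, Subtype.ext he⟩

end Finpartition

theorem card_surjective_eq_card_finpartition_mul_factorial (α β : Type*) [Fintype α]
    [DecidableEq α] [Fintype β] :
    Nat.card {f : α → β // Surjective f} =
      Nat.card {P : Finpartition (univ : Finset α) // #P.parts = Nat.card β} *
        (Nat.card β).factorial := by
  classical
  have hlabel (P : {P : Finpartition (univ : Finset α) // #P.parts = Nat.card β}) :
      Nat.card (P.1.parts ≃ β) = (Nat.card β).factorial := by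
    have hP : Fintype.card P.1.parts = Fintype.card β := by
      rw [Fintype.card_coe, P.2, Nat.card_eq_fintype_card]
    rw [Nat.card_eq_fintype_card, Fintype.card_equiv (Fintype.equivOfCardEq hP), hP,
      Nat.card_eq_fintype_card]
  rw [← Nat.card_congr (Equiv.ofBijective _ Finpartition.bijective_sigmaLiftParts),
    Nat.card_sigma, sum_congr rfl fun P _ ↦ hlabel P, sum_const, card_univ, smul_eq_mul,
    ← Nat.card_eq_fintype_card]

def Tuple.sortEquiv (n : ℕ) (α : Type*) [LinearOrder α] :
    (Fin n → α) ≃ {p : Perm (Fin n) × (Fin n → α) //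
      Monotone p.2 ∧ ∀ i j, i < j → p.2 i = p.2 j → p.1 i < p.1 j} where
  toFun f := ⟨(sort f, f ∘ sort f), eq_sort_iff.1 rfl⟩
  invFun p := p.1.2 ∘ p.1.1.symm
  left_inv f := by simp [comp_assoc]
  right_inv := by
    rintro ⟨⟨σ, b⟩, hb⟩
    have hσ : σ = sort (b ∘ σ.symm) := eq_sort_iff.2 (by simpa [comp_assoc] using hb)
    simp only [← hσ, comp_assoc, Equiv.symm_comp_self, comp_id]

-- Stated with `#t - n` rather than `n - #s`, so that the right side vanishes when `n < #s`.
theorem Finset.card_filter_powersetCard_superset {α : Type*} [DecidableEq α] {s t : Finset α}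
    (hst : s ⊆ t) {n : ℕ} (hn : n ≤ #t) :
    #{u ∈ t.powersetCard n | s ⊆ u} = (#t - #s).choose (#t - n) := by
  by_cases hsn : #s ≤ n
  · rw [card_filter_powersetCard_subset s t n hst hsn]
    exact Nat.choose_symm_of_eq_add (by have := card_le_card hst; omega)
  · rw [Nat.choose_eq_zero_of_lt (by have := card_le_card hst; omega), card_eq_zero,
      filter_eq_empty_iff]
    exact fun u hu hsu ↦ hsn ((card_le_card hsu).trans (mem_powersetCard.1 hu).2.le)

theorem card_finset_card_eq_superset {α : Type*} [Fintype α] [DecidableEq α] (D : Finset α)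
    {j : ℕ} (hj : j ≤ Fintype.card α) :
    Nat.card {J : Finset α // #J = j ∧ D ⊆ J} =
      (Fintype.card α - #D).choose (Fintype.card α - j) := by
  have hfilter : ({J | #J = j ∧ D ⊆ J} : Finset (Finset α)) =
      {J ∈ (univ : Finset α).powersetCard j | D ⊆ J} := by
    ext J
    simp [mem_powersetCard]
  rw [Nat.card_eq_fintype_card, Fintype.card_subtype, hfilter,
    card_filter_powersetCard_superset (subset_univ D) (by rwa [card_univ]), card_univ]

theorem sum_neg_one_pow_mul_choose_mul_choose {R : Type*} [CommRing R] {m d k : ℕ} (hd : d ≤ m)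
    (hk : k ≤ m) :
    ∑ j ∈ range (k + 1), (-1 : R) ^ (k - j) * (m - j).choose (k - j) * (m - d).choose (m - j) =
      if d = k then 1 else 0 := by
  set g : ℕ → R := fun r ↦ (-1) ^ r * (k - d).choose r
  have hterm : ∀ j ∈ range (k + 1),
      (-1 : R) ^ (k - j) * (m - j).choose (k - j) * (m - d).choose (m - j) =
        (m - d).choose (m - k) * g (k - j) := by
    intro j hj
    have hjk := mem_range_succ_iff.1 hj
    have hchoose : (m - j).choose (k - j) * (m - d).choose (m - j) =
        (m - d).choose (m - k) * (k - d).choose (k - j) := by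
      rw [mul_comm, Nat.choose_symm_of_eq_add (show m - j = (k - j) + (m - k) by omega),
        Nat.choose_mul (by omega), show m - d - (m - k) = k - d by omega,
        show m - j - (m - k) = k - j by omega]
    have := congrArg (Nat.cast : ℕ → R) hchoose
    push_cast at this
    linear_combination (-1 : R) ^ (k - j) * this
  have hreflect : ∑ j ∈ range (k + 1), g (k - j) = ∑ r ∈ range (k + 1), g r := by
    simpa using sum_range_reflect g (k + 1)
  rw [sum_congr rfl hterm, ← mul_sum, hreflect]
  rcases lt_trichotomy d k with hdk | rfl | hdk
  · obtain ⟨N, hN⟩ : ∃ N, k - d = N + 1 := ⟨k - d - 1, by omega⟩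
    have halt := Int.alternating_sum_range_choose_eq_choose (n := N) (m := k)
    rw [Nat.choose_eq_zero_of_lt (by omega : N < k)] at halt
    have hcast : ∑ r ∈ range (k + 1), g r =
        ((∑ r ∈ range (k + 1), ((-1) ^ r * (N + 1).choose r : ℤ) : ℤ) : R) := by
      simp [g, hN]
    simp [hcast, halt, hdk.ne]
  · simp [g, sum_range_succ']
  · simp [Nat.choose_eq_zero_of_lt (by omega : m - d < m - k), hdk.ne']

theorem eq_sum_neg_one_pow_mul_choose_of_eq_sum_choose {R : Type*} [CommRing R] {m : ℕ}
    {a s : ℕ → R} (h : ∀ j ≤ m, s j = ∑ d ∈ range (m + 1), a d * (m - d).choose (m - j))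
    {k : ℕ} (hk : k ≤ m) :
    a k = ∑ j ∈ range (k + 1), (-1) ^ (k - j) * ((m - j).choose (k - j) : R) * s j := calc
  a k = ∑ d ∈ range (m + 1), a d * if d = k then 1 else 0 := by
    simp [mem_range_succ_iff.2 hk]
  _ = ∑ d ∈ range (m + 1), a d * ∑ j ∈ range (k + 1),
        (-1 : R) ^ (k - j) * ((m - j).choose (k - j) : R) * ((m - d).choose (m - j) : R) :=
    sum_congr rfl fun d hd ↦ by
      rw [sum_neg_one_pow_mul_choose_mul_choose (mem_range_succ_iff.1 hd) hk]
  _ = ∑ j ∈ range (k + 1), (-1 : R) ^ (k - j) * ((m - j).choose (k - j) : R) *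
        ∑ d ∈ range (m + 1), a d * ((m - d).choose (m - j) : R) := by
    simp only [mul_sum]
    rw [sum_comm]
    exact sum_congr rfl fun _ _ ↦ sum_congr rfl fun _ _ ↦ by ring
  _ = _ := sum_congr rfl fun j hj ↦ by
    rw [h j (by have := mem_range_succ_iff.1 hj; omega)]

section Descents

variable {m : ℕ}

theorem Fin.exists_apply_eq_of_succ_le_add_one {g : Fin (m + 1) → ℕ} (h0 : g 0 = 0)
    (hstep : ∀ p : Fin m, g p.succ ≤ g p.castSucc + 1) (x : Fin (m + 1)) {v : ℕ}
    (hv : v ≤ g x) : ∃ y, g y = v := by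
  induction x using Fin.induction generalizing v with
  | zero => exact ⟨0, by omega⟩
  | succ p ih =>
    by_cases hvp : v ≤ g p.castSucc
    · exact ih hvp
    · exact ⟨p.succ, by have := hstep p; omega⟩

section Ascents

variable {α β : Type*} [LinearOrder α] [LinearOrder β]

def ascentSet (f : Fin (m + 1) → α) : Finset (Fin m) := {p | f p.castSucc < f p.succ}

def descentSet (f : Fin (m + 1) → α) : Finset (Fin m) := {p | f p.succ < f p.castSucc}

@[simp] theorem mem_ascentSet {f : Fin (m + 1) → α} {p : Fin m} :
    p ∈ ascentSet f ↔ f p.castSucc < f p.succ := by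
  simp [ascentSet]

@[simp] theorem mem_descentSet {f : Fin (m + 1) → α} {p : Fin m} :
    p ∈ descentSet f ↔ f p.succ < f p.castSucc := by
  simp [descentSet]

theorem descentCount_eq_card_descentSet (π : Perm (Fin (m + 1))) :
    descentCount π = #(descentSet π) := by
  let e : {i : Fin (m + 1) // ∃ h : (i : ℕ) + 1 < m + 1, π ⟨(i : ℕ) + 1, h⟩ < π i} ≃
      {p : Fin m // π p.succ < π p.castSucc} :=
    { toFun i := ⟨⟨i.1, by simpa using i.2.1⟩, i.2.2⟩
      invFun p := ⟨p.1.castSucc, by simp, p.2⟩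
      left_inv _ := rfl
      right_inv _ := rfl }
  rw [descentCount, Nat.card_congr e, Nat.card_eq_fintype_card, Fintype.card_subtype]
  rfl

theorem card_descentSet_le (f : Fin (m + 1) → α) : #(descentSet f) ≤ m :=
  (card_le_univ _).trans_eq (Fintype.card_fin m)

theorem descentSet_subset_ascentSet_iff {σ : Fin (m + 1) → α} (hσ : Injective σ)
    {b : Fin (m + 1) → β} (hb : Monotone b) :
    descentSet σ ⊆ ascentSet b ↔ ∀ i j, i < j → b i = b j → σ i < σ j := by
  constructor
  · intro hsub i j hij hbij
    -- `b` has no ascent inside its level set `Icc i j`, so `σ` has no descent there either.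
    refine strictMonoOn_of_lt_succ Set.ordConnected_Icc (fun a ha hai hsa ↦ ?_)
      ⟨le_rfl, hij.le⟩ ⟨hij.le, le_rfl⟩ hij
    obtain ⟨p, rfl⟩ := Fin.eq_castSucc_of_ne_last (x := a) fun h ↦ ha (h ▸ isMax_top)
    rw [Fin.orderSucc_castSucc] at hsa ⊢
    have hflat : ¬ b p.castSucc < b p.succ := fun hlt ↦
      (hlt.trans_le ((hb hsa.2).trans (hbij ▸ hb hai.1))).false
    have hσle : σ p.castSucc ≤ σ p.succ := not_lt.1 fun hlt ↦
      hflat (mem_ascentSet.1 (hsub (mem_descentSet.2 hlt)))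
    exact hσle.lt_of_ne (hσ.ne (Fin.castSucc_lt_succ (i := p)).ne)
  · intro hcompat p hp
    rw [mem_descentSet] at hp
    rw [mem_ascentSet]
    by_contra hflat
    have hbp := le_antisymm (hb (Fin.castSucc_lt_succ (i := p)).le) (not_lt.1 hflat)
    exact (hcompat _ _ (Fin.castSucc_lt_succ (i := p)) hbp).not_gt hp

end Ascents

section MonotoneSurjective

variable {j : ℕ}

def barCount (J : Finset (Fin m)) (x : Fin (m + 1)) : ℕ := #{p ∈ J | p.castSucc < x}

theorem barCount_zero (J : Finset (Fin m)) : barCount J 0 = 0 := by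
  simp [barCount]

theorem barCount_succ (J : Finset (Fin m)) (p : Fin m) :
    barCount J p.succ = barCount J p.castSucc + if p ∈ J then 1 else 0 := by
  simp only [barCount, card_filter, Fin.castSucc_lt_succ_iff, Fin.castSucc_lt_castSucc_iff,
    ← sum_ite_eq' J p (fun _ ↦ 1), ← sum_add_distrib]
  refine sum_congr rfl fun q _ ↦ ?_
  rcases lt_trichotomy q p with h | rfl | h
  · simp [h, h.le, h.ne]
  · simp
  · simp [h.not_gt, h.not_ge, h.ne']

theorem barCount_last (J : Finset (Fin m)) : barCount J (Fin.last m) = #J := by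
  simp [barCount, Fin.castSucc_lt_last]

theorem barCount_le_card (J : Finset (Fin m)) (x : Fin (m + 1)) : barCount J x ≤ #J :=
  card_filter_le _ _

def barMap {J : Finset (Fin m)} (hJ : #J = j) (x : Fin (m + 1)) : Fin (j + 1) :=
  ⟨barCount J x, Nat.lt_succ_of_le (hJ ▸ barCount_le_card J x)⟩

theorem ascentSet_barMap {J : Finset (Fin m)} (hJ : #J = j) : ascentSet (barMap hJ) = J := by
  ext p
  simp only [mem_ascentSet, barMap, Fin.mk_lt_mk, barCount_succ]
  split_ifs <;> simpa

theorem monotone_barMap {J : Finset (Fin m)} (hJ : #J = j) : Monotone (barMap hJ) :=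
  Fin.monotone_iff_le_succ.2 fun p ↦ by simp [barMap, Fin.mk_le_mk, barCount_succ]

theorem surjective_barMap {J : Finset (Fin m)} (hJ : #J = j) : Surjective (barMap hJ) := by
  intro v
  obtain ⟨y, hy⟩ := Fin.exists_apply_eq_of_succ_le_add_one (barCount_zero J)
    (fun p ↦ by rw [barCount_succ]; split_ifs <;> omega) (Fin.last m)
    (v := v) (by rw [barCount_last, hJ]; exact Nat.le_of_lt_succ v.2)
  exact ⟨y, Fin.ext hy⟩

variable {b : Fin (m + 1) → Fin (j + 1)} (hb : Monotone b) (hs : Surjective b)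
include hb hs

theorem val_succ_le_val_castSucc_add_one (p : Fin m) : (b p.succ : ℕ) ≤ b p.castSucc + 1 := by
  by_contra! hgap
  obtain ⟨y, hy⟩ := hs ⟨b p.castSucc + 1, by omega⟩
  rcases le_or_gt y p.castSucc with hyp | hyp
  · have := Fin.le_def.1 (hb hyp)
    simp [hy] at this
  · have := Fin.le_def.1 (hb (Fin.castSucc_lt_iff_succ_le.1 hyp))
    simp only [hy] at this
    omega

theorem val_eq_barCount_ascentSet (x : Fin (m + 1)) : (b x : ℕ) = barCount (ascentSet b) x := by
  induction x using Fin.induction with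
  | zero =>
    obtain ⟨y, hy⟩ := hs 0
    have := hb (Fin.zero_le y)
    simp_all [barCount_zero]
  | succ p ih =>
    have hle := Fin.le_def.1 (hb (Fin.castSucc_lt_succ (i := p)).le)
    have hstep := val_succ_le_val_castSucc_add_one hb hs p
    rw [barCount_succ, ← ih]
    split_ifs with hp <;> rw [mem_ascentSet, Fin.lt_def] at hp <;> omega

theorem card_ascentSet : #(ascentSet b) = j := by
  obtain ⟨y, hy⟩ := hs (Fin.last j)
  have hlast : b (Fin.last m) = Fin.last j := top_unique (hy.symm.trans_le (hb (Fin.le_last y)))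
  rw [← barCount_last, ← val_eq_barCount_ascentSet hb hs, hlast, Fin.val_last]

omit hb hs

def monotoneSurjectiveEquiv :
    {b : Fin (m + 1) → Fin (j + 1) // Monotone b ∧ Surjective b} ≃
      {J : Finset (Fin m) // #J = j} where
  toFun b := ⟨ascentSet b.1, card_ascentSet b.2.1 b.2.2⟩
  invFun J := ⟨barMap J.2, monotone_barMap J.2, surjective_barMap J.2⟩
  left_inv b :=
    Subtype.ext <| funext fun x ↦ Fin.ext (val_eq_barCount_ascentSet b.2.1 b.2.2 x).symm
  right_inv J := Subtype.ext (ascentSet_barMap J.2)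

end MonotoneSurjective

end Descents

theorem eulerian_eq_card_filter (n d : ℕ) :
    eulerian n d = #{π : Perm (Fin n) | descentCount π = d} := by
  rw [eulerian, Nat.card_eq_fintype_card, Fintype.card_subtype]

theorem stirling_mul_factorial (n i : ℕ) :
    stirling n i * i.factorial = Nat.card {f : Fin n → Fin i // Surjective f} := by
  rw [card_surjective_eq_card_finpartition_mul_factorial, Nat.card_eq_fintype_card (α := Fin i),
    Fintype.card_fin, stirling]

section SurjectionsByDescents

variable {m j : ℕ}

theorem card_compatible_monotone_surjective (σ : Perm (Fin (m + 1))) :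
    Nat.card {b : Fin (m + 1) → Fin (j + 1) //
      (Monotone b ∧ ∀ x y, x < y → b x = b y → σ x < σ y) ∧ Surjective b} =
      Nat.card {J : Finset (Fin m) // #J = j ∧ descentSet σ ⊆ J} := by
  refine Nat.card_congr <| (Equiv.subtypeEquivRight fun b ↦ ?_).trans <|
    (Equiv.subtypeSubtypeEquivSubtypeInter (fun b ↦ Monotone b ∧ Surjective b)
      (fun b ↦ descentSet σ ⊆ ascentSet b)).symm.trans <|
    (monotoneSurjectiveEquiv.subtypeEquiv (q := fun J ↦ descentSet σ ⊆ J.1)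
      fun _ ↦ Iff.rfl).trans
      (Equiv.subtypeSubtypeEquivSubtypeInter (fun J ↦ #J = j) (fun J ↦ descentSet σ ⊆ J))
  show _ ↔ (Monotone b ∧ Surjective b) ∧ descentSet σ ⊆ ascentSet b
  constructor
  · rintro ⟨⟨hb, hcompat⟩, hs⟩
    exact ⟨⟨hb, hs⟩, (descentSet_subset_ascentSet_iff σ.injective hb).2 hcompat⟩
  · rintro ⟨⟨hb, hs⟩, hsub⟩
    exact ⟨⟨hb, (descentSet_subset_ascentSet_iff σ.injective hb).1 hsub⟩, hs⟩

theorem card_surjective_eq_sum_card_superset_descentSet :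
    Nat.card {f : Fin (m + 1) → Fin (j + 1) // Surjective f} =
      ∑ σ : Perm (Fin (m + 1)),
        Nat.card {J : Finset (Fin m) // #J = j ∧ descentSet σ ⊆ J} := by
  rw [Nat.card_congr <|
    ((Tuple.sortEquiv (m + 1) (Fin (j + 1))).subtypeEquiv
      (q := fun p ↦ Surjective p.1.2) fun f ↦ (Equiv.surjective_comp _ f).symm).trans <|
    (Equiv.subtypeSubtypeEquivSubtypeInter _ _).trans (Equiv.subtypeProdEquivSigmaSubtype
      fun (σ : Perm (Fin (m + 1))) (b : Fin (m + 1) → Fin (j + 1)) ↦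
        (Monotone b ∧ ∀ x y, x < y → b x = b y → σ x < σ y) ∧ Surjective b),
    Nat.card_sigma]
  exact sum_congr rfl fun σ _ ↦ card_compatible_monotone_surjective σ

theorem card_surjective_eq_sum_eulerian (hj : j ≤ m) :
    Nat.card {f : Fin (m + 1) → Fin (j + 1) // Surjective f} =
      ∑ d ∈ range (m + 1), eulerian (m + 1) d * (m - d).choose (m - j) := by
  simp only [card_surjective_eq_sum_card_superset_descentSet,
    card_finset_card_eq_superset _ ((Fintype.card_fin m).symm ▸ hj), Fintype.card_fin,
    ← descentCount_eq_card_descentSet]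
  rw [← sum_fiberwise_of_maps_to (t := range (m + 1)) fun σ _ ↦ mem_range_succ_iff.2
    ((descentCount_eq_card_descentSet σ).trans_le (card_descentSet_le σ))]
  refine sum_congr rfl fun d _ ↦ ?_
  rw [sum_congr rfl fun σ hσ ↦ by rw [(mem_filter.1 hσ).2], sum_const, smul_eq_mul,
    eulerian_eq_card_filter]

end SurjectionsByDescents

theorem eulerian_eq_alternating_sum_stirling (n k : ℕ) (hn : 1 ≤ n) (hk : k ≤ n - 1) :
    (eulerian n k : ℤ) =
      ∑ i ∈ Finset.Icc 1 (k + 1),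
        (-1 : ℤ) ^ (k + 1 - i) * ((n - i).choose (k + 1 - i) : ℤ) *
          (stirling n i : ℤ) * (i.factorial : ℤ) := by
  obtain ⟨m, rfl⟩ : ∃ m, n = m + 1 := ⟨n - 1, by omega⟩
  have hsurj : ∀ j ≤ m, ((stirling (m + 1) (j + 1) * (j + 1).factorial : ℕ) : ℤ) =
      ∑ d ∈ range (m + 1), (eulerian (m + 1) d : ℤ) * (m - d).choose (m - j) := by
    intro j hj
    rw [stirling_mul_factorial, card_surjective_eq_sum_eulerian hj]
    push_cast
    rfl
  rw [eq_sum_neg_one_pow_mul_choose_of_eq_sum_choose hsurj (show k ≤ m by omega),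
    ← Ico_add_one_right_eq_Icc, sum_Ico_eq_sum_range]
  refine sum_congr rfl fun j _ ↦ ?_
  rw [add_comm 1 j, show k + 1 - (j + 1) = k - j by omega, show m + 1 - (j + 1) = m - j by omega]
  push_cast
  ring
end

section
/- (Worpitzky's identity) For every integer n ≥ 1 and every integer k ≥ 0, (k+1)^n = Σ_{i=0}^{n−1} A(n,i) · C(k+n−i, n), where C(a,b) denotes the binomial coefficient. -/
/-!
If `σ = Tuple.sort f` is the stable sorting permutation of a word `f : Fin n → Fin (k + 1)`,
then `f ∘ σ` is weakly increasing and strictly increasing across every descent of `σ`, and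
conversely every such word `g` is `f ∘ σ` for exactly one `f` sorted by `σ`. Adding to `g j`
the number of non-descents of `σ` before `j` is a bijection from these words onto the strictly
increasing maps `Fin n → Fin (k + n - des σ)`, of which there are `C(k + n - des σ, n)`.
Summing over `σ` counts all `(k + 1) ^ n` words.
-/

open Finset

section

variable {m : ℕ}

def MonotoneStrictAt {α : Type*} [Preorder α] (D : Finset (Fin m)) (g : Fin (m + 1) → α) :
    Prop :=
  Monotone g ∧ ∀ i ∈ D, g i.castSucc < g i.succ

theorem monotoneStrictAt_val_comp_iff {D : Finset (Fin m)} {N : ℕ} {g : Fin (m + 1) → Fin N} :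
    MonotoneStrictAt D (fun j ↦ (g j : ℕ)) ↔ MonotoneStrictAt D g := by
  simp only [MonotoneStrictAt, Fin.monotone_iff_le_succ, Fin.le_def, Fin.lt_def]

def nonstrictBefore (D : Finset (Fin m)) (j : Fin (m + 1)) : ℕ :=
  #{i ∈ Dᶜ | i.castSucc < j}

theorem nonstrictBefore_succ (D : Finset (Fin m)) (i : Fin m) :
    nonstrictBefore D i.succ = nonstrictBefore D i.castSucc + if i ∈ D then 0 else 1 := by
  unfold nonstrictBefore
  split_ifs with hi
  · congr 1
    ext i'
    simp only [mem_filter, mem_compl, Fin.castSucc_lt_succ_iff, Fin.castSucc_lt_castSucc_iff]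
    grind
  · rw [← card_insert_of_notMem (s := {i' ∈ Dᶜ | i'.castSucc < i.castSucc}) (a := i) (by simp)]
    congr 1
    ext i'
    simp only [mem_filter, mem_compl, Fin.castSucc_lt_succ_iff, Fin.castSucc_lt_castSucc_iff,
      mem_insert]
    grind

theorem nonstrictBefore_last (D : Finset (Fin m)) : nonstrictBefore D (Fin.last m) = #Dᶜ := by
  simp [nonstrictBefore]

theorem nonstrictBefore_le_card (D : Finset (Fin m)) (j : Fin (m + 1)) :
    nonstrictBefore D j ≤ #Dᶜ :=
  card_filter_le _ _

theorem strictMono_add_nonstrictBefore_iff {D : Finset (Fin m)} {g : Fin (m + 1) → ℕ} :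
    StrictMono (fun j ↦ g j + nonstrictBefore D j) ↔ MonotoneStrictAt D g := by
  simp only [Fin.strictMono_iff_lt_succ, MonotoneStrictAt, Fin.monotone_iff_le_succ,
    nonstrictBefore_succ, ← forall_and]
  refine forall_congr' fun i ↦ ?_
  split_ifs with hi <;> simp [hi] <;> omega

theorem nonstrictBefore_le_of_strictMono (D : Finset (Fin m)) {H : Fin (m + 1) → ℕ}
    (hH : StrictMono H) (j : Fin (m + 1)) : nonstrictBefore D j ≤ H j := by
  induction j using Fin.induction with
  | zero => simp [nonstrictBefore]
  | succ i ih =>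
    have := hH i.castSucc_lt_succ
    rw [nonstrictBefore_succ]
    split_ifs <;> omega

theorem monotoneStrictAt_sub_nonstrictBefore {D : Finset (Fin m)} {H : Fin (m + 1) → ℕ}
    (hH : StrictMono H) : MonotoneStrictAt D (fun j ↦ H j - nonstrictBefore D j) := by
  rw [← strictMono_add_nonstrictBefore_iff]
  convert hH using 2 with j
  exact Nat.sub_add_cancel (nonstrictBefore_le_of_strictMono D hH j)

theorem sub_nonstrictBefore_lt {D : Finset (Fin m)} {k : ℕ}
    (H : Fin (m + 1) ↪o Fin (k + 1 + #Dᶜ)) (j : Fin (m + 1)) :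
    H j - nonstrictBefore D j < k + 1 := by
  have hmono := (monotoneStrictAt_sub_nonstrictBefore (D := D)
    (Fin.val_strictMono.comp H.strictMono)).1 (Fin.le_last j)
  have := (H (Fin.last m)).2
  simp only [Function.comp_apply, nonstrictBefore_last] at hmono
  omega

def monotoneStrictAtEquiv (D : Finset (Fin m)) (k : ℕ) :
    {g : Fin (m + 1) → Fin (k + 1) // MonotoneStrictAt D g} ≃
      (Fin (m + 1) ↪o Fin (k + 1 + #Dᶜ)) where
  toFun g := OrderEmbedding.ofStrictMono
    (fun j ↦ ⟨g.1 j + nonstrictBefore D j, by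
      have := (g.1 j).2; have := nonstrictBefore_le_card D j; omega⟩)
    fun _ _ hij ↦ strictMono_add_nonstrictBefore_iff.2 (monotoneStrictAt_val_comp_iff.2 g.2) hij
  invFun H := ⟨fun j ↦ ⟨H j - nonstrictBefore D j, sub_nonstrictBefore_lt H j⟩,
    monotoneStrictAt_val_comp_iff.1
      (monotoneStrictAt_sub_nonstrictBefore (Fin.val_strictMono.comp H.strictMono))⟩
  left_inv g := Subtype.ext <| funext fun _ ↦ Fin.ext (Nat.add_sub_cancel _ _)
  right_inv H := DFunLike.ext _ _ fun j ↦ Fin.ext <| Nat.sub_add_cancel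
    (nonstrictBefore_le_of_strictMono D (Fin.val_strictMono.comp H.strictMono) j)

theorem card_monotoneStrictAt (D : Finset (Fin m)) (k : ℕ) :
    Nat.card {g : Fin (m + 1) → Fin (k + 1) // MonotoneStrictAt D g} =
      (k + 1 + #Dᶜ).choose (m + 1) := by
  rw [Nat.card_congr ((monotoneStrictAtEquiv D k).trans Set.powersetCard.ofFinEmbEquiv),
    Set.powersetCard.card, Nat.card_fin]

def descents (σ : Equiv.Perm (Fin (m + 1))) : Finset (Fin m) :=
  {i | σ i.succ < σ i.castSucc}

theorem card_descents_le (σ : Equiv.Perm (Fin (m + 1))) : #(descents σ) ≤ m :=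
  (card_le_univ _).trans_eq (Fintype.card_fin m)

theorem descentCount_eq_card_descents (σ : Equiv.Perm (Fin (m + 1))) :
    descentCount σ = #(descents σ) := by
  rw [descentCount, Nat.card_eq_fintype_card, Fintype.card_subtype, descents, eq_comm,
    ← card_map Fin.castSuccEmb]
  refine congrArg card (ext fun j ↦ ?_)
  simp only [mem_filter, mem_univ, true_and, mem_map, Fin.coe_castSuccEmb]
  constructor
  · rintro ⟨i, hi, rfl⟩
    exact ⟨by simp, hi⟩
  · rintro ⟨h, hlt⟩
    exact ⟨⟨j, by omega⟩, by simpa [Fin.succ, Fin.castSucc] using hlt, rfl⟩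

theorem sort_eq_iff_monotoneStrictAt {α : Type*} [LinearOrder α] {f : Fin (m + 1) → α}
    {σ : Equiv.Perm (Fin (m + 1))} :
    Tuple.sort f = σ ↔ MonotoneStrictAt (descents σ) (f ∘ σ) := by
  rw [eq_comm, Tuple.eq_sort_iff', Fin.strictMono_iff_lt_succ, MonotoneStrictAt,
    Fin.monotone_iff_le_succ]
  simp only [descents, mem_filter, mem_univ, true_and, Function.comp_apply, ← forall_and]
  refine forall_congr' fun i ↦ ?_
  have hne : σ i.castSucc ≠ σ i.succ := σ.injective.ne Fin.castSucc_lt_succ.ne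
  simp only [Tuple.graphEquiv₁, Equiv.trans_apply, Equiv.coe_fn_mk, ← Subtype.coe_lt_coe]
  refine Prod.Lex.toLex_lt_toLex.trans ?_
  grind

theorem card_sort_eq (k : ℕ) (σ : Equiv.Perm (Fin (m + 1))) :
    Nat.card {f : Fin (m + 1) → Fin (k + 1) // Tuple.sort f = σ} =
      (k + (m + 1) - descentCount σ).choose (m + 1) := by
  have hfiber : {f : Fin (m + 1) → Fin (k + 1) // Tuple.sort f = σ} ≃
      {g // MonotoneStrictAt (descents σ) g} :=
    (Equiv.arrowCongr σ.symm (Equiv.refl _)).subtypeEquiv fun _ ↦ sort_eq_iff_monotoneStrictAt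
  have hle := card_descents_le σ
  rw [Nat.card_congr hfiber, card_monotoneStrictAt, card_compl, Fintype.card_fin,
    descentCount_eq_card_descents]
  congr 1
  omega

theorem sum_eulerian_mul {M : Type*} [AddCommMonoid M] (F : ℕ → M) :
    ∑ i ∈ range (m + 1), eulerian (m + 1) i • F i =
      ∑ σ : Equiv.Perm (Fin (m + 1)), F (descentCount σ) := by
  have hmaps (σ : Equiv.Perm (Fin (m + 1))) (_ : σ ∈ univ) : descentCount σ ∈ range (m + 1) := by
    rw [mem_range, descentCount_eq_card_descents]
    exact Nat.lt_succ_of_le (card_descents_le σ)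
  rw [← sum_fiberwise_of_maps_to hmaps]
  refine sum_congr rfl fun i _ ↦ ?_
  rw [sum_congr rfl fun σ hσ ↦ by rw [(mem_filter.1 hσ).2], sum_const, eulerian,
    Nat.card_eq_fintype_card, Fintype.card_subtype]

end

/-- Worpitzky's identity. -/
theorem worpitzky (n k : ℕ) (hn : 1 ≤ n) :
    (k + 1) ^ n = ∑ i ∈ Finset.range n, eulerian n i * (k + n - i).choose n := by
  obtain ⟨m, rfl⟩ : ∃ m, n = m + 1 := ⟨n - 1, by omega⟩
  calc (k + 1) ^ (m + 1)
      = ∑ σ : Equiv.Perm (Fin (m + 1)),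
          Nat.card {f : Fin (m + 1) → Fin (k + 1) // Tuple.sort f = σ} := by
        simp only [Nat.card_eq_fintype_card]
        rw [← Fintype.card_sigma, ← Fintype.card_congr (Equiv.sigmaFiberEquiv Tuple.sort).symm]
        simp
    _ = ∑ σ : Equiv.Perm (Fin (m + 1)), (k + (m + 1) - descentCount σ).choose (m + 1) :=
        sum_congr rfl fun σ _ ↦ card_sort_eq k σ
    _ = ∑ i ∈ range (m + 1), eulerian (m + 1) i * (k + (m + 1) - i).choose (m + 1) :=
        (sum_eulerian_mul fun i ↦ (k + (m + 1) - i).choose (m + 1)).symm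
end

section
/- (Fundamental lemma of P-partitions) Let P be a partial order ≺ on {1,…,n}. For every P-partition f : {1,…,n} → ℕ there exists a unique linear extension π of P such that f is π-compatible, i.e., f(π(1)) ≤ f(π(2)) ≤ ⋯ ≤ f(π(n)) and f(π(i)) < f(π(i+1)) whenever π(i) > π(i+1). -/
/-- `f` is a `P`-partition for the partial order `P`: for `i ≺_P j`,
`f i ≤ f j` if `i < j` in the natural order, and `f i < f j` if `i > j`. -/
def IsPPartition {n : ℕ} (P : PartialOrder (Fin n)) (f : Fin n → ℕ) : Prop :=
  ∀ i j : Fin n, P.lt i j → ((i < j → f i ≤ f j) ∧ (j < i → f i < f j))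

/-- `Ω_P(k)`: the number of `P`-partitions with all values at most `k`. -/
noncomputable def orderPoly {n : ℕ} (P : PartialOrder (Fin n)) (k : ℕ) : ℕ :=
  Nat.card {f : Fin n → ℕ // IsPPartition P f ∧ ∀ x, f x ≤ k}

/-- `π` is a linear extension of the partial order `P`: `i ≺_P j` implies
`i` appears before `j` in the word `π(0) π(1) ⋯ π(n-1)`. -/
def IsLinearExtension {n : ℕ} (P : PartialOrder (Fin n)) (π : Equiv.Perm (Fin n)) : Prop :=
  ∀ i j : Fin n, P.lt i j → π.symm i < π.symm j

/-- `f` is `π`-compatible: `f (π 0) ≤ f (π 1) ≤ ⋯`, with strict inequality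
at every descent of `π`. -/
def PiCompatible {n : ℕ} (π : Equiv.Perm (Fin n)) (f : Fin n → ℕ) : Prop :=
  ∀ (i : Fin n) (h : (i : ℕ) + 1 < n),
    f (π i) ≤ f (π ⟨(i : ℕ) + 1, h⟩) ∧
      (π ⟨(i : ℕ) + 1, h⟩ < π i → f (π i) < f (π ⟨(i : ℕ) + 1, h⟩))

/-!
A permutation `π` makes `f` `π`-compatible exactly when it lists `Fin n` in increasing order of the
key `(f i, i)`, ordered lexicographically: a weak ascent of `f` along `π` is allowed only where `π`
ascends. The key is injective, so exactly one permutation does this, namely the one sorting by it.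
The `P`-partition condition says precisely that `i ≺ j` forces the key of `i` below that of `j`,
so the sorting permutation is a linear extension of `P`.
-/

open Function Equiv

lemma Fin.strictMono_iff_lt_succ_val {α : Type*} [Preorder α] {n : ℕ} {g : Fin n → α} :
    StrictMono g ↔ ∀ (i : Fin n) (hi : (i : ℕ) + 1 < n), g i < g ⟨(i : ℕ) + 1, hi⟩ := by
  refine ⟨fun hg i hi => hg (Fin.mk_lt_mk.2 i.val.lt_succ_self), fun h => ?_⟩
  cases n with
  | zero => exact fun i => i.elim0
  | succ m => exact Fin.strictMono_iff_lt_succ.2 fun i => h i.castSucc (by simp)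

section LexKey

variable {α β : Type*}

def lexKey (f : α → β) (i : α) : β ×ₗ α := toLex (f i, i)

lemma lexKey_injective (f : α → β) : Injective (lexKey f) :=
  fun _ _ h => congrArg Prod.snd (toLex.injective h)

lemma lexKey_lt_lexKey_iff [LinearOrder α] [PartialOrder β] {f : α → β} {i j : α} (hij : i ≠ j) :
    lexKey f i < lexKey f j ↔ f i ≤ f j ∧ (j < i → f i < f j) := by
  rw [lexKey, lexKey, Prod.Lex.toLex_lt_toLex']
  rcases hij.lt_or_gt with h | h
  · simp [h, h.not_gt]
  · simp only [h, h.not_gt, imp_false, true_implies, lt_iff_le_and_ne]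
    tauto

end LexKey

lemma existsUnique_perm_strictMono_comp {β : Type*} [LinearOrder β] {n : ℕ} {k : Fin n → β}
    (hk : Injective k) : ∃! σ : Perm (Fin n), StrictMono (k ∘ σ) :=
  ⟨Tuple.sort k, (Tuple.monotone_sort k).strictMono_of_injective (hk.comp (Equiv.injective _)),
    fun _ hσ => Equiv.ext fun i =>
      hk (congrFun (Tuple.unique_monotone hσ.monotone (Tuple.monotone_sort k)) i)⟩

lemma piCompatible_iff_strictMono_lexKey {n : ℕ} (π : Perm (Fin n)) (f : Fin n → ℕ) :
    PiCompatible π f ↔ StrictMono (lexKey f ∘ π) := by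
  rw [Fin.strictMono_iff_lt_succ_val]
  refine forall₂_congr fun i hi => (lexKey_lt_lexKey_iff (π.injective.ne ?_)).symm
  simp [Fin.ext_iff]

lemma IsPPartition.lexKey_lt {n : ℕ} {P : PartialOrder (Fin n)} {f : Fin n → ℕ}
    (hf : IsPPartition P f) {i j : Fin n} (hij : P.lt i j) : lexKey f i < lexKey f j := by
  have hne : i ≠ j := by
    rintro rfl
    exact @lt_irrefl _ P.toPreorder i hij
  obtain ⟨hle, hlt⟩ := hf i j hij
  exact (lexKey_lt_lexKey_iff hne).2 ⟨hne.lt_or_gt.elim hle fun h => (hlt h).le, hlt⟩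

lemma isLinearExtension_of_strictMono_comp {β : Type*} [LinearOrder β] {n : ℕ}
    {π : Perm (Fin n)} {k : Fin n → β} (hπ : StrictMono (k ∘ π))
    -- `P` is a local instance once bound, so it must come after `hπ`, which uses the usual order
    {P : PartialOrder (Fin n)}
    (hk : ∀ i j, P.lt i j → k i < k j) : IsLinearExtension P π :=
  fun i j hij => hπ.lt_iff_lt.1 (by simpa using hk i j hij)

/-- The fundamental lemma of P-partitions. -/
theorem pPartition_unique_linear_extension (n : ℕ) (P : PartialOrder (Fin n))
    (f : Fin n → ℕ) (hf : IsPPartition P f) :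
    ∃! π : Equiv.Perm (Fin n), IsLinearExtension P π ∧ PiCompatible π f := by
  obtain ⟨π, hπ, huniq⟩ := existsUnique_perm_strictMono_comp (lexKey_injective f)
  refine ⟨π, ⟨isLinearExtension_of_strictMono_comp hπ fun _ _ => hf.lexKey_lt,
    (piCompatible_iff_strictMono_lexKey π f).2 hπ⟩, ?_⟩
  rintro σ ⟨-, hσ⟩
  exact huniq σ ((piCompatible_iff_strictMono_lexKey σ f).1 hσ)
end

section
/- Let α be a type, let d ≥ 0 be an integer, let 𝓕 be a finite set of finite subsets of α each of cardinality d, and for each F ∈ 𝓕 let r(F) be a subset of F. Suppose that the intervals I_F = {G : r(F) ⊆ G ⊆ F} for F ∈ 𝓕 are pairwise disjoint, and let K = ⋃_{F ∈ 𝓕} I_F. For i ≥ 0 let f_i denote the number of sets G ∈ K with |G| = i. Then for every integer k with 0 ≤ k ≤ d, Σ_{i=0}^{k} (−1)^{k−i} · C(d−i, k−i) · f_i = |{F ∈ 𝓕 : |r(F)| = k}|, where C(a,b) denotes the binomial coefficient. -/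
/-!
The sets of size `i` in an interval `[s, t]` are `s ∪ u` with `u` an `(i - #s)`-subset of `t \ s`,
so a partition into intervals `[r F, F]` gives `f_i = ∑_F C(d - #(r F), i - #(r F))`. The
alternating sum therefore splits over facets, and for one facet, with `n = d - #(r F)` and
`l = k - #(r F)`, the identity `C(n, j) C(n - j, l - j) = C(n, l) C(l, j)` turns it into
`C(n, l) ∑_j (-1)^(l - j) C(l, j)`, which is `1` if `l = 0` and `0` otherwise.
-/

open Finset

theorem Int.alternating_sum_range_choose_rev (l : ℕ) :
    ∑ j ∈ Finset.range (l + 1), (-1 : ℤ) ^ (l - j) * l.choose j = if l = 0 then 1 else 0 := by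
  rw [← Int.alternating_sum_range_choose, ← sum_range_reflect]
  refine sum_congr rfl fun j hj => ?_
  rw [Nat.add_sub_cancel, Nat.choose_symm (by grind)]
  congr 3
  grind

theorem Int.alternating_sum_choose_mul_choose (d m k : ℕ) :
    ∑ i ∈ Finset.range (k + 1), (-1 : ℤ) ^ (k - i) * (d - i).choose (k - i) *
      ((if m ≤ i then (d - m).choose (i - m) else 0 : ℕ) : ℤ) = if m = k then 1 else 0 := by
  rcases lt_or_ge k m with hkm | hmk
  · rw [if_neg hkm.ne']
    refine sum_eq_zero fun i hi => ?_
    rw [if_neg (by grind), Nat.cast_zero, mul_zero]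
  obtain ⟨l, rfl⟩ := Nat.exists_eq_add_of_le hmk
  have hterm : ∀ j ∈ Finset.range (l + 1), (-1 : ℤ) ^ (m + l - (m + j)) *
      (d - (m + j)).choose (m + l - (m + j)) *
      ((if m ≤ m + j then (d - m).choose (m + j - m) else 0 : ℕ) : ℤ) =
      (d - m).choose l * ((-1 : ℤ) ^ (l - j) * l.choose j) := by
    intro j hj
    have hchoose : ((d - m).choose l * l.choose j : ℤ) =
        (d - m).choose j * (d - m - j).choose (l - j) := by
      exact_mod_cast Nat.choose_mul (by grind)
    rw [if_pos (Nat.le_add_right m j), Nat.add_sub_add_left, Nat.add_sub_cancel_left,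
      Nat.sub_add_eq]
    linear_combination (-1 : ℤ) ^ (l - j) * hchoose.symm
  rw [add_assoc, sum_range_add, sum_eq_zero (fun i hi => by rw [if_neg (by grind)]; simp),
    zero_add, sum_congr rfl hterm, ← mul_sum, Int.alternating_sum_range_choose_rev]
  by_cases hl : l = 0 <;> simp [hl]

namespace Finset

variable {α : Type*} [DecidableEq α]

theorem card_filter_card_eq_Icc {s t : Finset α} (h : s ⊆ t) (i : ℕ) :
    #{u ∈ Icc s t | #u = i} = if #s ≤ i then (#t - #s).choose (i - #s) else 0 := by
  have hdisj : ∀ u ∈ (t \ s).powerset, Disjoint s u := fun u hu =>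
    disjoint_of_subset_right (mem_powerset.1 hu) disjoint_sdiff
  have hcard : ∀ u ∈ (t \ s).powerset, #(s ∪ u) = #s + #u := fun u hu =>
    card_union_of_disjoint (hdisj u hu)
  have hinj : Set.InjOn (s ∪ ·) (t \ s).powerset := fun u hu v hv (huv : s ∪ u = s ∪ v) => by
    rw [← union_sdiff_cancel_left (hdisj u hu), huv, union_sdiff_cancel_left (hdisj v hv)]
  rw [Icc_eq_image_powerset h, filter_image, card_image_of_injOn (hinj.mono (filter_subset _ _)),
    filter_congr fun u hu => by rw [hcard u hu]]
  split_ifs with hi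
  · rw [← card_sdiff_of_subset h, ← card_powersetCard, powersetCard_eq_filter]
    congr 1
    exact filter_congr fun u _ => by omega
  · exact card_eq_zero.2 (filter_false_of_mem fun u _ => by omega)

theorem card_filter_card_eq_biUnion_Icc {ι : Type*} {S : Finset ι} {bot top : ι → Finset α}
    (hsub : ∀ i ∈ S, bot i ⊆ top i)
    (hdisj : (S : Set ι).PairwiseDisjoint fun i => Icc (bot i) (top i)) (n : ℕ) :
    #{u ∈ S.biUnion (fun i => Icc (bot i) (top i)) | #u = n} =
      ∑ i ∈ S, if #(bot i) ≤ n then (#(top i) - #(bot i)).choose (n - #(bot i)) else 0 := by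
  rw [filter_biUnion, card_biUnion (hdisj.mono_on fun i _ => filter_subset _ _)]
  exact sum_congr rfl fun i hi => card_filter_card_eq_Icc (hsub i hi) n

end Finset

theorem h_vector_of_partitionable_general {α : Type*} (d : ℕ) (𝓕 : Finset (Finset α))
    (hd : ∀ F ∈ 𝓕, F.card = d) (r : Finset α → Finset α) (hr : ∀ F ∈ 𝓕, r F ⊆ F)
    (hdisj : ∀ F ∈ 𝓕, ∀ F' ∈ 𝓕, F ≠ F' →
      ∀ G : Finset α, ¬((r F ⊆ G ∧ G ⊆ F) ∧ (r F' ⊆ G ∧ G ⊆ F')))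
    (k : ℕ) :
    (∑ i ∈ Finset.range (k + 1),
        (-1 : ℤ) ^ (k - i) * ((d - i).choose (k - i) : ℤ) *
          (Nat.card {G : Finset α // (∃ F ∈ 𝓕, r F ⊆ G ∧ G ⊆ F) ∧ G.card = i} : ℤ)) =
      (Nat.card {F : Finset α // F ∈ 𝓕 ∧ (r F).card = k} : ℤ) := by
  classical
  have hpart : (𝓕 : Set (Finset α)).PairwiseDisjoint fun F => Icc (r F) F :=
    fun F hF F' hF' hne => disjoint_left.2 fun G hG hG' =>
      hdisj F hF F' hF' hne G ⟨mem_Icc.1 hG, mem_Icc.1 hG'⟩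
  have hfaces (i : ℕ) : Nat.card {G : Finset α // (∃ F ∈ 𝓕, r F ⊆ G ∧ G ⊆ F) ∧ G.card = i} =
      ∑ F ∈ 𝓕, if #(r F) ≤ i then (d - #(r F)).choose (i - #(r F)) else 0 := by
    rw [Nat.subtype_card {G ∈ 𝓕.biUnion fun F => Icc (r F) F | #G = i} (by simp [mem_Icc]),
      card_filter_card_eq_biUnion_Icc (top := fun F => F) hr hpart]
    exact sum_congr rfl fun F hF => by rw [hd F hF]
  have hbottoms : Nat.card {F // F ∈ 𝓕 ∧ #(r F) = k} = #{F ∈ 𝓕 | #(r F) = k} :=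
    Nat.subtype_card _ (by simp)
  simp_rw [hfaces, hbottoms, Nat.cast_sum, mul_sum]
  rw [sum_comm, card_filter, Nat.cast_sum]
  refine sum_congr rfl fun F _ => ?_
  rw [Int.alternating_sum_choose_mul_choose, Nat.cast_ite, Nat.cast_one, Nat.cast_zero]

/-- The `h`-vector identity for a pure partitionable simplicial complex:
the faces `K` are partitioned into boolean intervals `[r F, F]`, one for each
facet `F ∈ 𝓕`, all facets having `d` vertices; then the alternating sum of the
face numbers `f_i` equals the number of facets whose interval bottom has `k`
elements. -/
theorem h_vector_of_partitionable {α : Type*} (d : ℕ) (𝓕 : Finset (Finset α))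
    (hd : ∀ F ∈ 𝓕, F.card = d) (r : Finset α → Finset α) (hr : ∀ F ∈ 𝓕, r F ⊆ F)
    (hdisj : ∀ F ∈ 𝓕, ∀ F' ∈ 𝓕, F ≠ F' →
      ∀ G : Finset α, ¬((r F ⊆ G ∧ G ⊆ F) ∧ (r F' ⊆ G ∧ G ⊆ F')))
    (k : ℕ) (hk : k ≤ d) :
    (∑ i ∈ Finset.range (k + 1),
        (-1 : ℤ) ^ (k - i) * ((d - i).choose (k - i) : ℤ) *
          (Nat.card {G : Finset α // (∃ F ∈ 𝓕, r F ⊆ G ∧ G ⊆ F) ∧ G.card = i} : ℤ)) =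
      (Nat.card {F : Finset α // F ∈ 𝓕 ∧ (r F).card = k} : ℤ) :=
  h_vector_of_partitionable_general d 𝓕 hd r hr hdisj k
end

section
/- For every integer k ≥ 0, the number N of 5-tuples (a_1, a_2, a_3, a_4, a_5) of natural numbers satisfying a_1 ≤ a_2 ≤ a_5, a_1 ≤ a_4 < a_3, and a_j ≤ k for all j, satisfies 40 · N = k(k+1)(k+2)(k+3)(2k+3). -/
/-!
Fix the value `x` of the minimal element `a 0`. The chains `x ≤ a 1 ≤ a 4 ≤ k` and
`x ≤ a 3 < a 2 ≤ k` are then independent, and there are `(k + 1 - x) (k + 2 - x) / 2` and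
`(k + 1 - x) (k - x) / 2` of them. Summing the product over `x` gives the quintic.
-/

open Finset

theorem card_filter_product_product_and {α β γ : Type*} (s : Finset α) (t : Finset β)
    (u : Finset γ) (P : α → β → Prop) (Q : α → γ → Prop) [∀ a b, Decidable (P a b)]
    [∀ a c, Decidable (Q a c)] :
    #{p ∈ s ×ˢ (t ×ˢ u) | P p.1 p.2.1 ∧ Q p.1 p.2.2} =
      ∑ a ∈ s, #{b ∈ t | P a b} * #{c ∈ u | Q a c} := by
  rw [card_filter, sum_product]
  refine sum_congr rfl fun a _ => ?_
  rw [← card_product, ← filter_product, card_filter]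

theorem card_filter_product_eq_sum {α β : Type*} (s : Finset α) (t : Finset β)
    (R : α → β → Prop) [∀ a b, Decidable (R a b)] :
    #{p ∈ s ×ˢ t | R p.1 p.2} = ∑ b ∈ t, #{a ∈ s | R a b} := by
  simp only [card_filter, sum_product_right]

theorem two_mul_sum_range_succ_sub (a n : ℕ) :
    2 * ∑ v ∈ range n, (v + 1 - a) = (n - a) * (n - a + 1) := by
  induction n with
  | zero => simp
  | succ n ih =>
    rw [sum_range_succ, mul_add, ih]
    rcases le_or_gt a n with h | h
    · obtain ⟨m, rfl⟩ := Nat.exists_eq_add_of_le h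
      simp only [Nat.add_sub_cancel_left, show a + m + 1 - a = m + 1 by omega]
      ring
    · simp only [show n - a = 0 by omega, show n + 1 - a = 0 by omega]

theorem two_mul_sum_range_sub (a n : ℕ) :
    2 * ∑ v ∈ range n, (v - a) = (n - a) * (n - a - 1) := by
  induction n with
  | zero => simp
  | succ n ih =>
    rw [sum_range_succ, mul_add, ih]
    rcases le_or_gt a n with h | h
    · obtain ⟨m, rfl⟩ := Nat.exists_eq_add_of_le h
      simp only [Nat.add_sub_cancel_left, show a + m + 1 - a = m + 1 by omega, Nat.add_sub_cancel]
      cases m with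
      | zero => rfl
      | succ m => simp only [Nat.add_sub_cancel]; ring
    · simp only [show n - a = 0 by omega, show n + 1 - a = 0 by omega]

theorem two_mul_card_pairs_le (a n : ℕ) :
    2 * #{p ∈ range n ×ˢ range n | a ≤ p.1 ∧ p.1 ≤ p.2} = (n - a) * (n - a + 1) := by
  rw [card_filter_product_eq_sum _ _ fun u v => a ≤ u ∧ u ≤ v, ← two_mul_sum_range_succ_sub]
  refine congrArg _ (sum_congr rfl fun v hv => ?_)
  rw [← Nat.card_Icc]
  congr 1
  ext u
  simp only [mem_filter, mem_range, mem_Icc] at hv ⊢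
  omega

theorem two_mul_card_pairs_lt (a n : ℕ) :
    2 * #{p ∈ range n ×ˢ range n | a ≤ p.1 ∧ p.1 < p.2} = (n - a) * (n - a - 1) := by
  rw [card_filter_product_eq_sum _ _ fun u v => a ≤ u ∧ u < v, ← two_mul_sum_range_sub]
  refine congrArg _ (sum_congr rfl fun v hv => ?_)
  rw [← Nat.card_Ico]
  congr 1
  ext u
  simp only [mem_filter, mem_range, mem_Ico] at hv ⊢
  omega

theorem ten_mul_sum_range_eq (k : ℕ) :
    10 * ∑ m ∈ range (k + 1), (m + 1) * (m + 2) * (m * (m + 1)) =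
      k * (k + 1) * (k + 2) * (k + 3) * (2 * k + 3) := by
  induction k with
  | zero => simp
  | succ k ih =>
    rw [sum_range_succ, mul_add, ih]
    ring

@[simps]
def boundedPPartitionEquiv : (Fin 5 → ℕ) ≃ ℕ × (ℕ × ℕ) × (ℕ × ℕ) where
  toFun a := (a 0, (a 1, a 4), (a 3, a 2))
  invFun p := ![p.1, p.2.1.1, p.2.2.2, p.2.2.1, p.2.1.2]
  left_inv a := funext fun i => by fin_cases i <;> rfl
  right_inv _ := rfl

theorem card_boundedPPartitions_eq_card_filter (k : ℕ) :
    Nat.card {a : Fin 5 → ℕ //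
        a 0 ≤ a 1 ∧ a 1 ≤ a 4 ∧ a 0 ≤ a 3 ∧ a 3 < a 2 ∧ ∀ j, a j ≤ k} =
      #{p ∈ range (k + 1) ×ˢ ((range (k + 1) ×ˢ range (k + 1)) ×ˢ
          (range (k + 1) ×ˢ range (k + 1))) |
        (p.1 ≤ p.2.1.1 ∧ p.2.1.1 ≤ p.2.1.2) ∧ (p.1 ≤ p.2.2.1 ∧ p.2.2.1 < p.2.2.2)} := by
  rw [← Nat.card_eq_finsetCard]
  refine Nat.card_congr (boundedPPartitionEquiv.subtypeEquiv fun a => ?_)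
  simp [Fin.forall_fin_succ]
  omega

/-- The number of `P`-partitions bounded by `k` of the poset on `{1,…,5}` with
cover relations `1 ≺ 2 ≺ 5` and `1 ≺ 4 ≺ 3`; tuples `(a 0, …, a 4)` here
correspond to `(a_1, …, a_5)`. -/
theorem card_bounded_pPartitions_example (k : ℕ) :
    40 * Nat.card {a : Fin 5 → ℕ //
        a 0 ≤ a 1 ∧ a 1 ≤ a 4 ∧ a 0 ≤ a 3 ∧ a 3 < a 2 ∧ ∀ j, a j ≤ k} =
      k * (k + 1) * (k + 2) * (k + 3) * (2 * k + 3) := by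
  set r := range (k + 1)
  calc 40 * Nat.card _
      = 10 * ∑ x ∈ r, (2 * #{p ∈ r ×ˢ r | x ≤ p.1 ∧ p.1 ≤ p.2}) *
          (2 * #{p ∈ r ×ˢ r | x ≤ p.1 ∧ p.1 < p.2}) := by
        rw [card_boundedPPartitions_eq_card_filter, card_filter_product_product_and r (r ×ˢ r)
          (r ×ˢ r) (fun x p => x ≤ p.1 ∧ p.1 ≤ p.2) (fun x p => x ≤ p.1 ∧ p.1 < p.2), mul_sum,
          mul_sum]
        exact sum_congr rfl fun x _ => by ring
    _ = 10 * ∑ x ∈ r, (k + 1 - x) * (k + 1 - x + 1) * ((k + 1 - x) * (k + 1 - x - 1)) := by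
        simp only [r, two_mul_card_pairs_le, two_mul_card_pairs_lt]
    _ = 10 * ∑ m ∈ range (k + 1), (m + 1) * (m + 2) * (m * (m + 1)) := by
        rw [← sum_range_reflect]
        refine congrArg _ (sum_congr rfl fun m hm => ?_)
        rw [show k + 1 - (k + 1 - 1 - m) = m + 1 by have := mem_range.mp hm; omega,
          Nat.add_sub_cancel]
        ring
    _ = _ := ten_mul_sum_range_eq k
end
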